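/- For every 1 ≤ p < ∞, t(L_p[0,1]) = 2^{1/p}, where L_p[0,1] is the Banach space of (equivalence classes of) real-valued p-integrable functions on [0,1] with respect to Lebesgue measure, with norm ‖f‖ = (∫_0^1 |f|^p)^{1/p}. -/

import Mathlib

/-!
Cut `[0,1]` into `N` intervals `A_j` of length `1/N` and let `e_j = N^{1/p} 1_{A_j}`.
Given unit vectors `x_1, …, x_n`, the masses `∫_{A_j} |x_i|^p` add up to at most `n`, so some
`A_j` carries at most `n/N` of the `p`-th power mass of every `x_i`; then
`‖x_i - e_j‖^p ≤ ((n/N)^{1/p} + 1)^p + 1 → 2`. Conversely, every unit vector `z` carries at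
most `1/N` of its mass on some `A_i`, and then
`‖e_i - z‖^p ≥ (1 - N^{-1/p})^p + 1 - 1/N → 2`.
-/

open ENNReal

attribute [local instance] MeasureTheory.Measure.Subtype.measureSpace

noncomputable def thinness (X : Type*) [NormedAddCommGroup X] : ℝ :=
  sInf {r : ℝ | 0 < r ∧ ∀ (n : ℕ) (x : Fin n → X), (∀ i, ‖x i‖ = 1) →
    ∀ ε : ℝ, 0 < ε → ∃ y : X, ‖y‖ = 1 ∧ ∀ i, ‖x i - y‖ < r + ε}

open Filter Topology MeasureTheory Function

theorem ENNReal.ne_zero_of_fact_one_le (p : ℝ≥0∞) [Fact (1 ≤ p)] : p ≠ 0 :=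
  (zero_lt_one.trans_le Fact.out).ne'

theorem thinness_eq_of {X : Type*} [NormedAddCommGroup X] {c : ℝ} (hc : 0 < c)
    (hle : ∀ (n : ℕ) (x : Fin n → X), (∀ i, ‖x i‖ = 1) → ∀ r, c < r →
      ∃ y : X, ‖y‖ = 1 ∧ ∀ i, ‖x i - y‖ < r)
    (hge : ∀ r < c, ∃ (n : ℕ) (x : Fin n → X), (∀ i, ‖x i‖ = 1) ∧
      ∀ y : X, ‖y‖ = 1 → ∃ i, r ≤ ‖x i - y‖) :
    thinness X = c := by
  have hc_mem : c ∈ {r : ℝ | 0 < r ∧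
      ∀ (n : ℕ) (x : Fin n → X), (∀ i, ‖x i‖ = 1) →
        ∀ ε : ℝ, 0 < ε → ∃ y : X, ‖y‖ = 1 ∧ ∀ i, ‖x i - y‖ < r + ε} :=
    ⟨hc, fun n x hx ε hε => hle n x hx (c + ε) (lt_add_of_pos_right c hε)⟩
  refine le_antisymm (csInf_le ⟨0, fun r hr => hr.1.le⟩ hc_mem) (le_csInf ⟨c, hc_mem⟩ ?_)
  rintro r ⟨-, hr⟩
  by_contra! hrc
  obtain ⟨n, x, hx, hfar⟩ := hge ((r + c) / 2) (by linarith)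
  obtain ⟨y, hy, hclose⟩ := hr n x hx ((c - r) / 2) (by linarith)
  obtain ⟨i, hi⟩ := hfar y hy
  linarith [hclose i]

theorem Real.le_rpow_one_div_of_rpow_le {a b q : ℝ} (ha : 0 ≤ a) (hq : 0 < q)
    (h : a ^ q ≤ b) : a ≤ b ^ (1 / q) := by
  rwa [one_div, Real.le_rpow_inv_iff_of_pos ha ((Real.rpow_nonneg ha q).trans h) hq]

theorem Real.rpow_one_div_le_of_le_rpow {a b q : ℝ} (ha : 0 ≤ a) (hb : 0 ≤ b) (hq : 0 < q)
    (h : b ≤ a ^ q) : b ^ (1 / q) ≤ a := by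
  rwa [one_div, Real.rpow_inv_le_iff_of_pos hb ha hq]

theorem Real.tendsto_rpow_add_rpow_one_div {ι : Type*} {l : Filter ι} {u v : ι → ℝ} (q : ℝ)
    (hu : Tendsto u l (𝓝 1)) (hv : Tendsto v l (𝓝 1)) :
    Tendsto (fun k => (u k ^ q + v k) ^ (1 / q)) l (𝓝 (2 ^ (1 / q))) := by
  have h := ((Real.continuousAt_rpow_const 1 q (Or.inl one_ne_zero)).tendsto.comp hu).add hv
  rw [Real.one_rpow, one_add_one_eq_two] at h
  exact (Real.continuousAt_rpow_const 2 (1 / q) (Or.inl two_ne_zero)).tendsto.comp h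

theorem Real.tendsto_const_div_natCast_rpow {q : ℝ} (hq : 0 < q) (C : ℝ) :
    Tendsto (fun N : ℕ => (C / N) ^ q) atTop (𝓝 0) := by
  have h := (Real.continuousAt_rpow_const 0 q (Or.inr hq.le)).tendsto.comp
    (tendsto_const_div_atTop_nhds_zero_nat C)
  rwa [Real.zero_rpow hq.ne'] at h

namespace MeasureTheory

variable {α : Type*} [MeasurableSpace α] {μ : Measure α} {p : ℝ≥0∞}

theorem eLpNorm_rpow_toReal_eq_lintegral (hp0 : p ≠ 0) (hp : p ≠ ∞) (g : α → ℝ)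
    (ν : Measure α) : eLpNorm g p ν ^ p.toReal = ∫⁻ x, ‖g x‖ₑ ^ p.toReal ∂ν := by
  rw [eLpNorm_eq_lintegral_rpow_enorm_toReal hp0 hp, ← ENNReal.rpow_mul, one_div,
    inv_mul_cancel₀ (ENNReal.toReal_ne_zero.mpr ⟨hp0, hp⟩), ENNReal.rpow_one]

namespace Lp

variable (p) in
noncomputable def normalizedIndicator {s : Set α} (hs : MeasurableSet s) (hμs : μ s ≠ ∞) :
    Lp ℝ p μ :=
  indicatorConstLp p hs hμs (μ.real s ^ (1 / p.toReal))⁻¹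

theorem norm_normalizedIndicator (hp0 : p ≠ 0) (hp : p ≠ ∞) {s : Set α}
    (hs : MeasurableSet s) (hμs : μ s ≠ ∞) (hμ0 : μ s ≠ 0) :
    ‖normalizedIndicator p hs hμs‖ = 1 := by
  have hpos : 0 < μ.real s ^ (1 / p.toReal) :=
    Real.rpow_pos_of_pos (ENNReal.toReal_pos hμ0 hμs) _
  rw [normalizedIndicator, norm_indicatorConstLp hp0 hp, norm_inv,
    Real.norm_of_nonneg hpos.le, inv_mul_cancel₀ hpos.ne']

variable [Fact (1 ≤ p)]

local notation "ρ[" s "]" => LpToLpRestrictCLM α ℝ ℝ μ p s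

theorem norm_rpow_eq_lintegral (hp : p ≠ ∞) (f : Lp ℝ p μ) :
    ‖f‖ ^ p.toReal = (∫⁻ x, ‖f x‖ₑ ^ p.toReal ∂μ).toReal := by
  rw [Lp.norm_def, ENNReal.toReal_rpow,
    eLpNorm_rpow_toReal_eq_lintegral (ne_zero_of_fact_one_le p) hp]

theorem norm_restrict_rpow_eq_setLIntegral (hp : p ≠ ∞) (s : Set α) (f : Lp ℝ p μ) :
    ‖ρ[s] f‖ ^ p.toReal = (∫⁻ x in s, ‖f x‖ₑ ^ p.toReal ∂μ).toReal := by
  rw [Lp.norm_def, eLpNorm_congr_ae (LpToLpRestrictCLM_coeFn ℝ s f), ENNReal.toReal_rpow,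
    eLpNorm_rpow_toReal_eq_lintegral (ne_zero_of_fact_one_le p) hp]

theorem lintegral_rpow_enorm_ne_top (hp : p ≠ ∞) (f : Lp ℝ p μ) :
    ∫⁻ x, ‖f x‖ₑ ^ p.toReal ∂μ ≠ ∞ :=
  (lintegral_rpow_enorm_lt_top_of_eLpNorm_lt_top (ne_zero_of_fact_one_le p) hp
    (Lp.eLpNorm_lt_top f)).ne

theorem setLIntegral_rpow_enorm_ne_top (hp : p ≠ ∞) (s : Set α) (f : Lp ℝ p μ) :
    ∫⁻ x in s, ‖f x‖ₑ ^ p.toReal ∂μ ≠ ∞ :=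
  ne_top_of_le_ne_top (lintegral_rpow_enorm_ne_top hp f) (setLIntegral_le_lintegral _ _)

theorem norm_rpow_eq_restrict_add_restrict_compl (hp : p ≠ ∞) {s : Set α}
    (hs : MeasurableSet s) (f : Lp ℝ p μ) :
    ‖f‖ ^ p.toReal = ‖ρ[s] f‖ ^ p.toReal + ‖ρ[sᶜ] f‖ ^ p.toReal := by
  rw [norm_restrict_rpow_eq_setLIntegral hp, norm_restrict_rpow_eq_setLIntegral hp,
    norm_rpow_eq_lintegral hp, ← ENNReal.toReal_add (setLIntegral_rpow_enorm_ne_top hp _ f)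
      (setLIntegral_rpow_enorm_ne_top hp _ f), lintegral_add_compl _ hs]

theorem sum_norm_restrict_rpow_le (hp : p ≠ ∞) {ι : Type*} [Fintype ι] {A : ι → Set α}
    (hA : ∀ j, MeasurableSet (A j)) (hAd : Pairwise (Disjoint on A)) (f : Lp ℝ p μ) :
    ∑ j, ‖ρ[A j] f‖ ^ p.toReal ≤ ‖f‖ ^ p.toReal := by
  simp only [norm_restrict_rpow_eq_setLIntegral hp, norm_rpow_eq_lintegral hp]
  rw [← ENNReal.toReal_sum fun j _ => setLIntegral_rpow_enorm_ne_top hp _ f]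
  refine ENNReal.toReal_mono (lintegral_rpow_enorm_ne_top hp f) ?_
  rw [← tsum_fintype (L := .unconditional _), ← lintegral_iUnion hA hAd]
  exact setLIntegral_le_lintegral _ _

theorem exists_sum_norm_restrict_rpow_le (hp : p ≠ ∞) {n N : ℕ} (hN : 0 < N)
    {A : Fin N → Set α} (hA : ∀ j, MeasurableSet (A j)) (hAd : Pairwise (Disjoint on A))
    (x : Fin n → Lp ℝ p μ) (hx : ∀ i, ‖x i‖ ≤ 1) :
    ∃ j, ∑ i, ‖ρ[A j] (x i)‖ ^ p.toReal ≤ n / N := by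
  have hsum : ∑ j, ∑ i, ‖ρ[A j] (x i)‖ ^ p.toReal ≤ ∑ _j : Fin N, (n / N : ℝ) := calc
    _ = ∑ i, ∑ j, ‖ρ[A j] (x i)‖ ^ p.toReal := Finset.sum_comm
    _ ≤ ∑ _i : Fin n, (1 : ℝ) := Finset.sum_le_sum fun i _ =>
        (sum_norm_restrict_rpow_le hp hA hAd (x i)).trans
          (Real.rpow_le_one (norm_nonneg _) (hx i) ((toReal_pos_iff_ne_top p).2 hp).le)
    _ = ∑ _j : Fin N, (n / N : ℝ) := by
        have : (N : ℝ) ≠ 0 := by positivity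
        simp only [Finset.sum_const, Finset.card_univ, Fintype.card_fin, nsmul_eq_mul, mul_one]
        field_simp
  obtain ⟨j, -, hj⟩ := Finset.exists_le_of_sum_le ⟨⟨0, hN⟩, Finset.mem_univ _⟩ hsum
  exact ⟨j, hj⟩

theorem restrict_compl_normalizedIndicator {s : Set α} (hs : MeasurableSet s)
    (hμs : μ s ≠ ∞) : ρ[sᶜ] (normalizedIndicator p hs hμs) = 0 := by
  rw [Lp.eq_zero_iff_ae_eq_zero]
  exact (LpToLpRestrictCLM_coeFn ℝ sᶜ _).trans <| Filter.EventuallyEq.trans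
    (ae_restrict_of_ae indicatorConstLp_coeFn) (indicator_ae_eq_restrict_compl hs)

theorem norm_restrict_normalizedIndicator (hp : p ≠ ∞) {s : Set α} (hs : MeasurableSet s)
    (hμs : μ s ≠ ∞) (hμ0 : μ s ≠ 0) :
    ‖ρ[s] (normalizedIndicator p hs hμs)‖ = 1 := by
  have hpos := (toReal_pos_iff_ne_top p).2 hp
  have h := norm_rpow_eq_restrict_add_restrict_compl hp hs (normalizedIndicator p hs hμs)
  rw [norm_normalizedIndicator (ne_zero_of_fact_one_le p) hp hs hμs hμ0,
    restrict_compl_normalizedIndicator, norm_zero, Real.one_rpow, Real.zero_rpow hpos.ne',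
    add_zero] at h
  rw [← Real.rpow_rpow_inv (norm_nonneg _) hpos.ne', ← h, Real.one_rpow]

theorem norm_sub_normalizedIndicator_rpow_le (hp : p ≠ ∞) {s : Set α} (hs : MeasurableSet s)
    (hμs : μ s ≠ ∞) (hμ0 : μ s ≠ 0) {x : Lp ℝ p μ} (hx : ‖x‖ ≤ 1) {δ : ℝ}
    (hδ : ‖ρ[s] x‖ ^ p.toReal ≤ δ) :
    ‖x - normalizedIndicator p hs hμs‖ ^ p.toReal ≤
      (δ ^ (1 / p.toReal) + 1) ^ p.toReal + 1 := by
  have hpos := (toReal_pos_iff_ne_top p).2 hp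
  have hxs := Real.le_rpow_one_div_of_rpow_le (norm_nonneg _) hpos hδ
  have hon : ‖ρ[s] (x - normalizedIndicator p hs hμs)‖ ≤ δ ^ (1 / p.toReal) + 1 := by
    rw [map_sub]
    linarith [norm_sub_le (ρ[s] x) (ρ[s] (normalizedIndicator p hs hμs)),
      norm_restrict_normalizedIndicator hp hs hμs hμ0]
  have hoff : ‖ρ[sᶜ] (x - normalizedIndicator p hs hμs)‖ ≤ 1 := by
    rw [map_sub, restrict_compl_normalizedIndicator, sub_zero]
    exact (norm_Lp_toLp_restrict_le sᶜ x).trans hx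
  rw [norm_rpow_eq_restrict_add_restrict_compl hp hs]
  gcongr
  exact Real.rpow_le_one (norm_nonneg _) hoff hpos.le

theorem rpow_le_norm_normalizedIndicator_sub_rpow (hp : p ≠ ∞) {s : Set α}
    (hs : MeasurableSet s) (hμs : μ s ≠ ∞) (hμ0 : μ s ≠ 0) {z : Lp ℝ p μ}
    (hz : ‖z‖ = 1) {δ : ℝ} (hδ1 : δ ≤ 1) (hδ : ‖ρ[s] z‖ ^ p.toReal ≤ δ) :
    (1 - δ ^ (1 / p.toReal)) ^ p.toReal + (1 - δ) ≤
      ‖normalizedIndicator p hs hμs - z‖ ^ p.toReal := by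
  have hpos := (toReal_pos_iff_ne_top p).2 hp
  have hδ0 : 0 ≤ δ := (Real.rpow_nonneg (norm_nonneg _) _).trans hδ
  have hzs := Real.le_rpow_one_div_of_rpow_le (norm_nonneg _) hpos hδ
  have hon : 1 - δ ^ (1 / p.toReal) ≤ ‖ρ[s] (normalizedIndicator p hs hμs - z)‖ := by
    have h := norm_sub_norm_le (ρ[s] (normalizedIndicator p hs hμs)) (ρ[s] z)
    rw [norm_restrict_normalizedIndicator hp hs hμs hμ0] at h
    rw [map_sub]
    linarith
  have hoff : 1 - δ ≤ ‖ρ[sᶜ] (normalizedIndicator p hs hμs - z)‖ ^ p.toReal := by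
    have h := norm_rpow_eq_restrict_add_restrict_compl hp hs z
    rw [hz, Real.one_rpow] at h
    rw [map_sub, restrict_compl_normalizedIndicator, zero_sub, norm_neg]
    linarith
  rw [norm_rpow_eq_restrict_add_restrict_compl hp hs]
  have : δ ^ (1 / p.toReal) ≤ 1 := Real.rpow_le_one hδ0 hδ1 (by positivity)
  have : 0 ≤ 1 - δ ^ (1 / p.toReal) := by linarith
  gcongr

section DisjointFamily

variable (hp : p ≠ ∞) {N : ℕ} (hN : 0 < N) {A : Fin N → Set α}
  (hAm : ∀ j, MeasurableSet (A j)) (hA0 : ∀ j, μ (A j) ≠ 0) (hAt : ∀ j, μ (A j) ≠ ∞)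
  (hAd : Pairwise (Disjoint on A))
include hp hN hAm hA0 hAt hAd

theorem exists_norm_eq_one_forall_norm_sub_le {n : ℕ} (x : Fin n → Lp ℝ p μ)
    (hx : ∀ i, ‖x i‖ = 1) : ∃ y : Lp ℝ p μ, ‖y‖ = 1 ∧ ∀ i,
      ‖x i - y‖ ≤ (((n / N : ℝ) ^ (1 / p.toReal) + 1) ^ p.toReal + 1) ^ (1 / p.toReal) := by
  obtain ⟨j, hj⟩ := exists_sum_norm_restrict_rpow_le hp hN hAm hAd x fun i => (hx i).le
  refine ⟨normalizedIndicator p (hAm j) (hAt j),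
    norm_normalizedIndicator (ne_zero_of_fact_one_le p) hp (hAm j) (hAt j) (hA0 j),
    fun i => ?_⟩
  have hxj : ‖ρ[A j] (x i)‖ ^ p.toReal ≤ n / N :=
    (Finset.single_le_sum (fun i _ => by positivity) (Finset.mem_univ i)).trans hj
  exact Real.le_rpow_one_div_of_rpow_le (norm_nonneg _) ((toReal_pos_iff_ne_top p).2 hp)
    (norm_sub_normalizedIndicator_rpow_le hp (hAm j) (hAt j) (hA0 j) (hx i).le hxj)

theorem exists_le_norm_normalizedIndicator_sub {z : Lp ℝ p μ} (hz : ‖z‖ = 1) :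
    ∃ i, ((1 - (1 / N : ℝ) ^ (1 / p.toReal)) ^ p.toReal + (1 - 1 / N)) ^ (1 / p.toReal) ≤
      ‖normalizedIndicator p (hAm i) (hAt i) - z‖ := by
  obtain ⟨i, hi⟩ := exists_sum_norm_restrict_rpow_le hp hN hAm hAd (fun _ : Fin 1 => z)
    fun _ => hz.le
  rw [Fin.sum_univ_one, Nat.cast_one] at hi
  have hN1 : (1 / N : ℝ) ≤ 1 := div_le_one_of_le₀ (by exact_mod_cast hN) (Nat.cast_nonneg N)
  refine ⟨i, Real.rpow_one_div_le_of_le_rpow (norm_nonneg _) ?_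
    ((toReal_pos_iff_ne_top p).2 hp)
    (rpow_le_norm_normalizedIndicator_sub_rpow hp (hAm i) (hAt i) (hA0 i) hz hN1 hi)⟩
  have : (1 / N : ℝ) ^ (1 / p.toReal) ≤ 1 :=
    Real.rpow_le_one (by positivity) hN1 (by positivity)
  have : 0 ≤ 1 - (1 / N : ℝ) := by linarith
  positivity

end DisjointFamily

theorem thinness_eq_of_forall_exists_disjoint (hp : p ≠ ∞)
    (h : ∀ N : ℕ, ∃ A : Fin N → Set α, (∀ j, MeasurableSet (A j)) ∧
      (∀ j, μ (A j) ≠ 0) ∧ (∀ j, μ (A j) ≠ ∞) ∧ Pairwise (Disjoint on A)) :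
    thinness (Lp ℝ p μ) = 2 ^ (1 / p.toReal) := by
  have hpos := (toReal_pos_iff_ne_top p).2 hp
  refine thinness_eq_of (by positivity) (fun n x hx r hr => ?_) (fun r hr => ?_)
  · have hlim : Tendsto (fun N : ℕ => (((n / N : ℝ) ^ (1 / p.toReal) + 1) ^ p.toReal + 1) ^
        (1 / p.toReal)) atTop (𝓝 (2 ^ (1 / p.toReal))) :=
      Real.tendsto_rpow_add_rpow_one_div _ (by
        simpa using (Real.tendsto_const_div_natCast_rpow (by positivity) n).add_const 1)
        tendsto_const_nhds
    obtain ⟨N, hNr, hN⟩ :=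
      ((hlim.eventually (gt_mem_nhds hr)).and (eventually_gt_atTop 0)).exists
    obtain ⟨A, hAm, hA0, hAt, hAd⟩ := h N
    obtain ⟨y, hy, hxy⟩ := exists_norm_eq_one_forall_norm_sub_le hp hN hAm hA0 hAt hAd x hx
    exact ⟨y, hy, fun i => (hxy i).trans_lt hNr⟩
  · have hlim : Tendsto (fun N : ℕ => ((1 - (1 / N : ℝ) ^ (1 / p.toReal)) ^ p.toReal +
        (1 - 1 / N)) ^ (1 / p.toReal)) atTop (𝓝 (2 ^ (1 / p.toReal))) :=
      Real.tendsto_rpow_add_rpow_one_div _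
        (by simpa using (Real.tendsto_const_div_natCast_rpow (by positivity) 1).const_sub 1)
        (by simpa using (tendsto_const_div_atTop_nhds_zero_nat (1 : ℝ)).const_sub 1)
    obtain ⟨N, hNr, hN⟩ :=
      ((hlim.eventually (lt_mem_nhds hr)).and (eventually_gt_atTop 0)).exists
    obtain ⟨A, hAm, hA0, hAt, hAd⟩ := h N
    refine ⟨N, fun i => normalizedIndicator p (hAm i) (hAt i),
      fun i => norm_normalizedIndicator (ne_zero_of_fact_one_le p) hp (hAm i) (hAt i)
        (hA0 i),
      fun z hz => ?_⟩
    obtain ⟨i, hi⟩ := exists_le_norm_normalizedIndicator_sub hp hN hAm hA0 hAt hAd hz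
    exact ⟨i, hNr.le.trans hi⟩

end Lp

end MeasureTheory

theorem exists_pairwise_disjoint_pos_measure_Icc_zero_one (N : ℕ) :
    ∃ A : Fin N → Set (Set.Icc (0 : ℝ) 1), (∀ j, MeasurableSet (A j)) ∧
      (∀ j, volume (A j) ≠ 0) ∧ (∀ j, volume (A j) ≠ ∞) ∧
      Pairwise (Disjoint on A) := by
  set f : ℕ → ℝ := fun k => k / N
  have hf : Monotone f := fun a b hab => by simp only [f]; gcongr
  refine ⟨fun j => Subtype.val ⁻¹' Set.Ico (f j) (f (j + 1)),
    fun j => measurable_subtype_coe measurableSet_Ico, fun j => ?_, fun j => measure_ne_top _ _,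
    ?_⟩
  · have hN : (0 : ℝ) < N := by exact_mod_cast j.pos
    have hsub : Set.Ico (f j) (f (j + 1)) ⊆ Set.Icc 0 1 := fun t ht =>
      ⟨(by positivity : 0 ≤ f j).trans ht.1,
        ht.2.le.trans ((div_le_one hN).2 (by exact_mod_cast j.2))⟩
    rw [volume_preimage_coe measurableSet_Icc.nullMeasurableSet measurableSet_Ico,
      Set.inter_eq_left.2 hsub, Real.volume_Ico, ne_eq, ENNReal.ofReal_eq_zero, not_le,
      sub_pos]
    exact div_lt_div_of_pos_right (by push_cast; linarith) hN
  · exact fun i j hij => ((hf.pairwise_disjoint_on_Ico_succ).comp_of_injective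
      Fin.val_injective hij).preimage _

/-- For every `1 ≤ p < ∞`, `t(L_p[0,1]) = 2^(1/p)`, where `L_p[0,1]` is the space of
`p`-integrable functions on `[0,1]` with respect to Lebesgue measure. -/
theorem thinness_Lp (p : ℝ≥0∞) [Fact (1 ≤ p)] (hp : p ≠ ⊤) :
    thinness (MeasureTheory.Lp ℝ p
      (MeasureTheory.volume : MeasureTheory.Measure (Set.Icc (0:ℝ) 1))) =
    (2 : ℝ) ^ (1 / p.toReal) :=
  Lp.thinness_eq_of_forall_exists_disjoint hp exists_pairwise_disjoint_pos_measure_Icc_zero_one
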